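/- Under Assumption 1, assume in addition K ∈ L^{4/3}(ℝ) and E(Y₁⁴) < ∞. Then for every η > 0 and every ψ ∈ L²(ℝ) with ‖ψ‖₂ ≤ 1, E[ ( Y₁·(K_η ∗ ψ)(X₁) )² ] ≤ ‖f‖_∞^{1/2}·‖K‖_{4/3}²·E(Y₁⁴)^{1/2}/√η. (The proof combines the Cauchy–Schwarz inequality with Young's convolution inequality ‖K_η ∗ ψ‖₄ ≤ ‖ψ‖₂·‖K_η‖_{4/3} and ‖K_η‖_{4/3} = η^{−1/4}‖K‖_{4/3}.) -/

import Mathlib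

/-!
By Cauchy–Schwarz, `E[(Y g(X))²] ≤ √(E Y⁴) · √(E g(X)⁴)` with `g = K_η ∗ ψ`, and since the law of
`X` has density `f ≤ ‖f‖_∞`, `E g(X)⁴ ≤ ‖f‖_∞ ‖g‖₄⁴`. Young's inequality for the exponents
`1/2 + 3/4 = 1 + 1/4` bounds `‖g‖₄⁴` by `‖K_η‖_{4/3}⁴ ‖ψ‖₂⁴ ≤ ‖K‖_{4/3}⁴ / η`, the last step
being the scaling `∫ |K_η|^{4/3} = η^{-1/3} ∫ |K|^{4/3}`. Young's inequality itself follows from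
the pointwise three-factor Hölder inequality for `∫ |k(x - y) ψ(y)| dy`, integrated in `x` by
Tonelli and translation invariance of Lebesgue measure.
-/

open MeasureTheory ProbabilityTheory Real

noncomputable section

/-- Rescaled kernel `K_η(x) = (1/η) K(x/η)`. -/
def Kh (K : ℝ → ℝ) (h x : ℝ) : ℝ := (1 / h) * K (x / h)

/-- Convolution `(g ∗ k)(x) = ∫ g(x − y) k(y) dy`. -/
def conv (g k : ℝ → ℝ) (x : ℝ) : ℝ := ∫ y : ℝ, g (x - y) * k y

/-- Sup norm. -/
def supN (g : ℝ → ℝ) : ℝ := ⨆ x : ℝ, |g x|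

/-- L^{4/3}(ℝ, dx) norm. -/
def norm43 (g : ℝ → ℝ) : ℝ := (∫ x : ℝ, |g x| ^ ((4 : ℝ) / 3)) ^ ((3 : ℝ) / 4)

end

open scoped ENNReal

theorem measurable_Kh {K : ℝ → ℝ} (hK : Measurable K) (η : ℝ) : Measurable (Kh K η) := by
  unfold Kh; fun_prop

theorem measurable_conv {k ψ : ℝ → ℝ} (hk : Measurable k) (hψ : Measurable ψ) :
    Measurable (conv k ψ) :=
  (by fun_prop : Measurable fun z : ℝ × ℝ => k (z.1 - z.2) * ψ z.2).stronglyMeasurable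
    |>.integral_prod_right'.measurable

theorem ENNReal.lintegral_rpow_mul_rpow_mul_rpow_le {α : Type*} [MeasurableSpace α]
    {μ : Measure α} {f g h : α → ℝ≥0∞} (hf : AEMeasurable f μ) (hg : AEMeasurable g μ)
    (hh : AEMeasurable h μ) {a b c : ℝ} (ha : 0 ≤ a) (hb : 0 ≤ b) (hc : 0 ≤ c)
    (habc : a + b + c = 1) :
    ∫⁻ x, f x ^ a * g x ^ b * h x ^ c ∂μ ≤
      (∫⁻ x, f x ∂μ) ^ a * (∫⁻ x, g x ∂μ) ^ b * (∫⁻ x, h x ∂μ) ^ c := by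
  simpa [Fin.prod_univ_three] using
    ENNReal.lintegral_prod_norm_pow_le Finset.univ (f := ![f, g, h]) (p := ![a, b, c])
      (by simp [Fin.forall_fin_succ, hf, hg, hh]) (by simpa [Fin.sum_univ_three] using habc)
      (by simp [Fin.forall_fin_succ, ha, hb, hc])

theorem one_sub_one_div_nonneg {p : ℝ} (hp : 1 ≤ p) : 0 ≤ 1 - 1 / p :=
  sub_nonneg.2 ((div_le_one (by linarith)).2 hp)

theorem ENNReal.mul_eq_rpow_mul_rpow_mul_rpow {p q r : ℝ} (hp : 1 ≤ p) (hq : 1 ≤ q) (hr : 0 < r)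
    (hpqr : 1 / p + 1 / q = 1 + 1 / r) (s t : ℝ≥0∞) :
    s * t = (s ^ q * t ^ p) ^ (1 / r) * (s ^ q) ^ (1 - 1 / p) * (t ^ p) ^ (1 - 1 / q) := by
  have hs : q * (1 / r) + q * (1 - 1 / p) = 1 := by
    rw [← mul_add, show 1 / r + (1 - 1 / p) = 1 / q by linarith]; field_simp
  have ht : p * (1 / r) + p * (1 - 1 / q) = 1 := by
    rw [← mul_add, show 1 / r + (1 - 1 / q) = 1 / p by linarith]; field_simp
  have h1p := one_sub_one_div_nonneg hp
  have h1q := one_sub_one_div_nonneg hq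
  have h1r : 0 ≤ 1 / r := by positivity
  rw [ENNReal.mul_rpow_of_nonneg _ _ h1r, ← ENNReal.rpow_mul, ← ENNReal.rpow_mul,
    ← ENNReal.rpow_mul, ← ENNReal.rpow_mul]
  calc s * t = s ^ (q * (1 / r) + q * (1 - 1 / p)) * t ^ (p * (1 / r) + p * (1 - 1 / q)) := by
        rw [hs, ht, ENNReal.rpow_one, ENNReal.rpow_one]
    _ = _ := by
        rw [ENNReal.rpow_add_of_nonneg _ _ (by positivity) (by positivity),
          ENNReal.rpow_add_of_nonneg _ _ (by positivity) (by positivity)]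
        ring

theorem enorm_conv_rpow_le {p q r : ℝ} (hp : 1 ≤ p) (hq : 1 ≤ q) (hr : 0 < r)
    (hpqr : 1 / p + 1 / q = 1 + 1 / r) {k ψ : ℝ → ℝ} (hk : Measurable k) (hψ : Measurable ψ)
    (x : ℝ) :
    ‖conv k ψ x‖ₑ ^ r ≤ (∫⁻ y, ‖k (x - y)‖ₑ ^ q * ‖ψ y‖ₑ ^ p) *
      ((∫⁻ y, ‖k y‖ₑ ^ q) ^ (r * (1 - 1 / p)) * (∫⁻ y, ‖ψ y‖ₑ ^ p) ^ (r * (1 - 1 / q))) := by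
  have h1p := one_sub_one_div_nonneg hp
  have h1q := one_sub_one_div_nonneg hq
  have hholder : ‖conv k ψ x‖ₑ ≤ (∫⁻ y, ‖k (x - y)‖ₑ ^ q * ‖ψ y‖ₑ ^ p) ^ (1 / r) *
      (∫⁻ y, ‖k y‖ₑ ^ q) ^ (1 - 1 / p) * (∫⁻ y, ‖ψ y‖ₑ ^ p) ^ (1 - 1 / q) :=
    calc ‖conv k ψ x‖ₑ ≤ ∫⁻ y, ‖k (x - y)‖ₑ * ‖ψ y‖ₑ := by
          simpa only [conv, enorm_mul] using
            enorm_integral_le_lintegral_enorm (fun y => k (x - y) * ψ y)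
      _ = ∫⁻ y, (‖k (x - y)‖ₑ ^ q * ‖ψ y‖ₑ ^ p) ^ (1 / r) * (‖k (x - y)‖ₑ ^ q) ^ (1 - 1 / p) *
            (‖ψ y‖ₑ ^ p) ^ (1 - 1 / q) := by
          simp only [← ENNReal.mul_eq_rpow_mul_rpow_mul_rpow hp hq hr hpqr]
      _ ≤ _ := by
          rw [← lintegral_sub_left_eq_self (fun y => ‖k y‖ₑ ^ q) x]
          exact ENNReal.lintegral_rpow_mul_rpow_mul_rpow_le (by fun_prop) (by fun_prop)
            (by fun_prop) (by positivity) h1p h1q (by linarith)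
  calc ‖conv k ψ x‖ₑ ^ r ≤ _ := ENNReal.rpow_le_rpow hholder hr.le
    _ = _ := by
      rw [ENNReal.mul_rpow_of_nonneg _ _ hr.le, ENNReal.mul_rpow_of_nonneg _ _ hr.le,
        ← ENNReal.rpow_mul, ← ENNReal.rpow_mul, ← ENNReal.rpow_mul, one_div_mul_cancel hr.ne',
        ENNReal.rpow_one, mul_comm (1 - 1 / p), mul_comm (1 - 1 / q), mul_assoc]

theorem lintegral_enorm_conv_rpow_le {p q r : ℝ} (hp : 1 ≤ p) (hq : 1 ≤ q) (hr : 0 < r)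
    (hpqr : 1 / p + 1 / q = 1 + 1 / r) {k ψ : ℝ → ℝ} (hk : Measurable k) (hψ : Measurable ψ) :
    ∫⁻ x, ‖conv k ψ x‖ₑ ^ r ≤ (∫⁻ x, ‖k x‖ₑ ^ q) ^ (r / q) * (∫⁻ x, ‖ψ x‖ₑ ^ p) ^ (r / p) := by
  set Lk := ∫⁻ x, ‖k x‖ₑ ^ q
  set Nψ := ∫⁻ x, ‖ψ x‖ₑ ^ p
  have hF : Measurable fun z : ℝ × ℝ => ‖k (z.1 - z.2)‖ₑ ^ q * ‖ψ z.2‖ₑ ^ p := by fun_prop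
  have htotal : ∫⁻ x, ∫⁻ y, ‖k (x - y)‖ₑ ^ q * ‖ψ y‖ₑ ^ p = Lk * Nψ := by
    have hy : ∀ y, ∫⁻ x, ‖k (x - y)‖ₑ ^ q * ‖ψ y‖ₑ ^ p = Lk * ‖ψ y‖ₑ ^ p := fun y => by
      rw [lintegral_mul_const _ (by fun_prop), lintegral_sub_right_eq_self (fun x => ‖k x‖ₑ ^ q)]
    rw [lintegral_lintegral_swap hF.aemeasurable, lintegral_congr hy]
    exact lintegral_const_mul _ (by fun_prop)
  have hexp : ∀ {a b : ℝ}, 1 / a + 1 / b = 1 + 1 / r → 1 + r * (1 - 1 / a) = r / b := by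
    intro a b h
    calc 1 + r * (1 - 1 / a) = r * (1 / r + (1 - 1 / a)) := by field_simp
      _ = r / b := by rw [show 1 / r + (1 - 1 / a) = 1 / b by linarith]; ring
  have h1p := mul_nonneg hr.le (one_sub_one_div_nonneg hp)
  have h1q := mul_nonneg hr.le (one_sub_one_div_nonneg hq)
  calc ∫⁻ x, ‖conv k ψ x‖ₑ ^ r
      ≤ ∫⁻ x, (∫⁻ y, ‖k (x - y)‖ₑ ^ q * ‖ψ y‖ₑ ^ p) *
          (Lk ^ (r * (1 - 1 / p)) * Nψ ^ (r * (1 - 1 / q))) :=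
        lintegral_mono fun x => enorm_conv_rpow_le hp hq hr hpqr hk hψ x
    _ = Lk ^ (1 + r * (1 - 1 / p)) * Nψ ^ (1 + r * (1 - 1 / q)) := by
        rw [lintegral_mul_const'' _ hF.lintegral_prod_right'.aemeasurable, htotal,
          ENNReal.rpow_add_of_nonneg _ _ zero_le_one h1p,
          ENNReal.rpow_add_of_nonneg _ _ zero_le_one h1q, ENNReal.rpow_one, ENNReal.rpow_one]
        ring
    _ = Lk ^ (r / q) * Nψ ^ (r / p) := by
        rw [hexp hpqr, hexp (add_comm (1 / q) (1 / p) ▸ hpqr)]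

theorem lintegral_comp_div_const (g : ℝ → ℝ≥0∞) {η : ℝ} (hη : 0 < η) :
    ∫⁻ x, g (x / η) = ENNReal.ofReal η * ∫⁻ x, g x := by
  have hη' : η⁻¹ ≠ 0 := inv_ne_zero hη.ne'
  have := lintegral_map_equiv g (MeasurableEquiv.mulLeft₀ η⁻¹ hη') (μ := volume)
  simp only [MeasurableEquiv.coe_mulLeft₀] at this
  rw [Real.map_volume_mul_left hη', lintegral_smul_measure, inv_inv, abs_of_pos hη] at this
  simp_rw [div_eq_inv_mul]
  exact this.symm

theorem lintegral_enorm_Kh_rpow (K : ℝ → ℝ) {η q : ℝ} (hη : 0 < η) (hq : 0 ≤ q) :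
    ∫⁻ x, ‖Kh K η x‖ₑ ^ q = ENNReal.ofReal (η ^ (1 - q)) * ∫⁻ x, ‖K x‖ₑ ^ q := by
  have hconst : ‖1 / η‖ₑ ^ q * ENNReal.ofReal η = ENNReal.ofReal (η ^ (1 - q)) := by
    rw [Real.enorm_eq_ofReal_abs, abs_of_pos (by positivity), ENNReal.ofReal_rpow_of_nonneg
      (by positivity) hq, ← ENNReal.ofReal_mul (by positivity), Real.div_rpow zero_le_one hη.le,
      Real.one_rpow, Real.rpow_sub hη, Real.rpow_one, one_div_mul_eq_div]
  simp_rw [Kh, enorm_mul, ENNReal.mul_rpow_of_nonneg _ _ hq]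
  rw [lintegral_const_mul' _ _ (by simp [Real.enorm_eq_ofReal_abs, hq]),
    lintegral_comp_div_const (fun x => ‖K x‖ₑ ^ q) hη, ← mul_assoc, hconst]

theorem Real.enorm_pow_of_even {n : ℕ} (hn : Even n) (t : ℝ) :
    ‖t‖ₑ ^ n = ENNReal.ofReal (t ^ n) := by
  rw [Real.enorm_eq_ofReal_abs, ← ENNReal.ofReal_pow (abs_nonneg t), hn.pow_abs]

section LebesgueIntegralOfReal

variable {α : Type*} [MeasurableSpace α] {μ : Measure α} {u : α → ℝ}

theorem lintegral_enorm_pow_eq_ofReal_integral {n : ℕ} (hn : Even n)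
    (hu : Integrable (fun x => u x ^ n) μ) :
    ∫⁻ x, ‖u x‖ₑ ^ n ∂μ = ENNReal.ofReal (∫ x, u x ^ n ∂μ) := by
  rw [ofReal_integral_eq_lintegral_ofReal hu (ae_of_all _ fun x => hn.pow_nonneg _)]
  simp_rw [Real.enorm_pow_of_even hn]

theorem lintegral_enorm_rpow_eq_ofReal_integral {p : ℝ} (hp : 0 ≤ p)
    (hu : Integrable (fun x => |u x| ^ p) μ) :
    ∫⁻ x, ‖u x‖ₑ ^ p ∂μ = ENNReal.ofReal (∫ x, |u x| ^ p ∂μ) := by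
  rw [ofReal_integral_eq_lintegral_ofReal hu (ae_of_all _ fun x => by positivity)]
  simp_rw [Real.enorm_eq_ofReal_abs, ENNReal.ofReal_rpow_of_nonneg (abs_nonneg _) hp]

theorem integral_sq_eq_toReal_lintegral_enorm_sq (hu : AEStronglyMeasurable u μ) :
    ∫ x, u x ^ 2 ∂μ = (∫⁻ x, ‖u x‖ₑ ^ 2 ∂μ).toReal := by
  rw [integral_eq_lintegral_of_nonneg_ae (ae_of_all _ fun x => sq_nonneg _) (hu.pow 2)]
  simp_rw [Real.enorm_pow_of_even even_two]

theorem lintegral_enorm_mul_sq_le (hu : AEMeasurable u μ) {v : α → ℝ} (hv : AEMeasurable v μ) :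
    ∫⁻ x, ‖u x * v x‖ₑ ^ 2 ∂μ ≤
      (∫⁻ x, ‖u x‖ₑ ^ 4 ∂μ) ^ (1 / 2 : ℝ) * (∫⁻ x, ‖v x‖ₑ ^ 4 ∂μ) ^ (1 / 2 : ℝ) := by
  have := ENNReal.lintegral_mul_le_Lp_mul_Lq μ Real.HolderConjugate.two_two
    (f := fun x => ‖u x‖ₑ ^ 2) (g := fun x => ‖v x‖ₑ ^ 2) (by fun_prop) (by fun_prop)
  simpa only [Pi.mul_apply, enorm_mul, mul_pow, ENNReal.rpow_ofNat, ← pow_mul] using this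

end LebesgueIntegralOfReal

theorem lintegral_comp_le_of_map_eq_withDensity {Ω α : Type*} [MeasurableSpace Ω]
    [MeasurableSpace α] {μ : Measure Ω} {ν : Measure α} {X : Ω → α} (hX : Measurable X)
    {f : α → ℝ} (hf : Measurable f) {S : ℝ} (hfS : ∀ x, f x ≤ S)
    (hlaw : μ.map X = ν.withDensity fun x => ENNReal.ofReal (f x))
    {φ : α → ℝ≥0∞} (hφ : Measurable φ) :
    ∫⁻ ω, φ (X ω) ∂μ ≤ ENNReal.ofReal S * ∫⁻ x, φ x ∂ν :=
  calc ∫⁻ ω, φ (X ω) ∂μ = ∫⁻ x, ENNReal.ofReal (f x) * φ x ∂ν := by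
        rw [← lintegral_map hφ hX, hlaw,
          lintegral_withDensity_eq_lintegral_mul _ hf.ennreal_ofReal hφ]
        rfl
    _ ≤ ∫⁻ x, ENNReal.ofReal S * φ x ∂ν := by gcongr with x; exact hfS x
    _ = ENNReal.ofReal S * ∫⁻ x, φ x ∂ν := lintegral_const_mul _ hφ

theorem lintegral_enorm_conv_Kh_rpow_four_le {K ψ : ℝ → ℝ} (hK : Measurable K)
    (hψ : Measurable ψ) (hK43 : Integrable fun x => |K x| ^ ((4 : ℝ) / 3)) {η : ℝ} (hη : 0 < η) :
    ∫⁻ x, ‖conv (Kh K η) ψ x‖ₑ ^ (4 : ℝ) ≤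
      ENNReal.ofReal (norm43 K ^ 4 / η) * (∫⁻ x, ‖ψ x‖ₑ ^ (2 : ℝ)) ^ (2 : ℝ) := by
  set I := ∫ x, |K x| ^ ((4 : ℝ) / 3)
  have hI : 0 ≤ I := integral_nonneg fun x => by positivity
  have hKh :
      ∫⁻ x, ‖Kh K η x‖ₑ ^ ((4 : ℝ) / 3) = ENNReal.ofReal (η ^ (1 - (4 : ℝ) / 3) * I) := by
    rw [lintegral_enorm_Kh_rpow K hη (by norm_num),
      lintegral_enorm_rpow_eq_ofReal_integral (by norm_num) hK43,
      ← ENNReal.ofReal_mul (by positivity)]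
  have hconst : (η ^ (1 - (4 : ℝ) / 3) * I) ^ (3 : ℝ) = norm43 K ^ 4 / η := by
    rw [Real.mul_rpow (by positivity) hI, ← Real.rpow_mul hη.le, norm43, ← Real.rpow_natCast,
      ← Real.rpow_mul hI]
    norm_num [Real.rpow_neg_one]
    ring
  have young := lintegral_enorm_conv_rpow_le (p := 2) (q := 4 / 3) (r := 4) (by norm_num)
    (by norm_num) (by norm_num) (by norm_num) (measurable_Kh hK η) hψ
  rwa [hKh, ENNReal.ofReal_rpow_of_nonneg (by positivity) (by norm_num),
    show (4 : ℝ) / (4 / 3) = 3 by norm_num, show (4 : ℝ) / 2 = 2 by norm_num, hconst] at young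

theorem le_supN {f : ℝ → ℝ} (hf0 : ∀ x, 0 ≤ f x) {C : ℝ} (hC : ∀ x, f x ≤ C) (x : ℝ) :
    f x ≤ supN f := by
  have hbdd : BddAbove (Set.range fun x => |f x|) := ⟨C, by
    rintro _ ⟨y, rfl⟩
    show |f y| ≤ C
    rw [abs_of_nonneg (hf0 y)]
    exact hC y⟩
  exact (le_abs_self _).trans (le_ciSup hbdd x)

theorem lintegral_enorm_conv_Kh_comp_pow_four_le {Ω : Type*} [MeasurableSpace Ω]
    {μ : Measure Ω} {X : Ω → ℝ} (hX : Measurable X) {f : ℝ → ℝ} (hf : Measurable f) {S : ℝ}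
    (hS : 0 ≤ S) (hfS : ∀ x, f x ≤ S)
    (hlaw : μ.map X = volume.withDensity fun x => ENNReal.ofReal (f x))
    {K : ℝ → ℝ} (hK : Measurable K) (hK43 : Integrable fun x => |K x| ^ ((4 : ℝ) / 3))
    {η : ℝ} (hη : 0 < η) {ψ : ℝ → ℝ} (hψ : Measurable ψ)
    (hψ2 : Integrable fun x => ψ x ^ 2) (hψ1 : ∫ x, ψ x ^ 2 ≤ 1) :
    ∫⁻ ω, ‖conv (Kh K η) ψ (X ω)‖ₑ ^ 4 ∂μ ≤ ENNReal.ofReal (S * (norm43 K ^ 4 / η)) := by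
  have hψL2 : ∫⁻ x, ‖ψ x‖ₑ ^ (2 : ℝ) ≤ 1 := by
    simp_rw [ENNReal.rpow_ofNat, lintegral_enorm_pow_eq_ofReal_integral even_two hψ2]
    exact ENNReal.ofReal_le_one.mpr hψ1
  calc ∫⁻ ω, ‖conv (Kh K η) ψ (X ω)‖ₑ ^ 4 ∂μ
      ≤ ENNReal.ofReal S * ∫⁻ x, ‖conv (Kh K η) ψ x‖ₑ ^ (4 : ℝ) := by
        simpa only [ENNReal.rpow_ofNat] using lintegral_comp_le_of_map_eq_withDensity hX hf hfS
          hlaw ((measurable_conv (measurable_Kh hK η) hψ).enorm.pow_const (4 : ℝ))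
    _ ≤ ENNReal.ofReal S * (ENNReal.ofReal (norm43 K ^ 4 / η) * 1) := by
        gcongr
        exact (lintegral_enorm_conv_Kh_rpow_four_le hK hψ hK43 hη).trans <| by
          gcongr; exact ENNReal.rpow_le_one hψL2 (by norm_num)
    _ = ENNReal.ofReal (S * (norm43 K ^ 4 / η)) := by rw [mul_one, ← ENNReal.ofReal_mul hS]

theorem integral_mul_sq_le_sqrt_mul_sqrt {Ω : Type*} [MeasurableSpace Ω] {μ : Measure Ω}
    {u v : Ω → ℝ} (hu : AEMeasurable u μ) (hv : AEMeasurable v μ)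
    (hu4 : Integrable (fun ω => u ω ^ 4) μ) {B : ℝ} (hB : 0 ≤ B)
    (hv4 : ∫⁻ ω, ‖v ω‖ₑ ^ 4 ∂μ ≤ ENNReal.ofReal B) :
    ∫ ω, (u ω * v ω) ^ 2 ∂μ ≤ √(∫ ω, u ω ^ 4 ∂μ) * √B := by
  have hE : 0 ≤ ∫ ω, u ω ^ 4 ∂μ := integral_nonneg fun ω => by positivity
  calc ∫ ω, (u ω * v ω) ^ 2 ∂μ = (∫⁻ ω, ‖u ω * v ω‖ₑ ^ 2 ∂μ).toReal :=
        integral_sq_eq_toReal_lintegral_enorm_sq (hu.mul hv).aestronglyMeasurable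
    _ ≤ (ENNReal.ofReal (∫ ω, u ω ^ 4 ∂μ) ^ (1 / 2 : ℝ) *
          ENNReal.ofReal B ^ (1 / 2 : ℝ)).toReal := by
        refine ENNReal.toReal_mono (by finiteness) ?_
        refine (lintegral_enorm_mul_sq_le hu hv).trans ?_
        rw [lintegral_enorm_pow_eq_ofReal_integral (by decide) hu4]
        gcongr
    _ = √(∫ ω, u ω ^ 4 ∂μ) * √B := by
        rw [ENNReal.ofReal_rpow_of_nonneg hE (by norm_num),
          ENNReal.ofReal_rpow_of_nonneg hB (by norm_num), ← ENNReal.ofReal_mul (by positivity),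
          ENNReal.toReal_ofReal (by positivity), Real.sqrt_eq_rpow, Real.sqrt_eq_rpow]

theorem stmt_16_general
    {Ω : Type*} [MeasurableSpace Ω] (μ : Measure Ω)
    (X ε : Ω → ℝ) (b f K : ℝ → ℝ)
    (hXmeas : Measurable X) (hεmeas : Measurable ε)
    (hbmeas : Measurable b) (hfmeas : Measurable f) (hKmeas : Measurable K)
    (hf0 : ∀ x, 0 ≤ f x)
    (hXlaw : Measure.map X μ
      = MeasureTheory.volume.withDensity (fun x => ENNReal.ofReal (f x)))
    -- Assumption 1
    (hfbdd : ∃ C, ∀ x, f x ≤ C)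
    -- K ∈ L^{4/3}(ℝ)
    (hK43 : Integrable (fun x : ℝ => |K x| ^ ((4 : ℝ) / 3)))
    -- E(Y₁⁴) < ∞
    (hY4 : Integrable (fun ω => (b (X ω) + ε ω) ^ 4) μ) :
    ∀ η : ℝ, 0 < η → ∀ ψ : ℝ → ℝ, Measurable ψ →
      Integrable (fun x : ℝ => (ψ x) ^ 2) → (∫ x : ℝ, (ψ x) ^ 2) ≤ 1 →
      (∫ ω, ((b (X ω) + ε ω) * conv (Kh K η) ψ (X ω)) ^ 2 ∂μ)
        ≤ Real.sqrt (supN f) * (norm43 K) ^ 2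
            * Real.sqrt (∫ ω, (b (X ω) + ε ω) ^ 4 ∂μ) / Real.sqrt η := by
  intro η hη ψ hψ hψ2 hψ1
  obtain ⟨C, hC⟩ := hfbdd
  have hfS : ∀ x, f x ≤ supN f := le_supN hf0 hC
  have hS : 0 ≤ supN f := (hf0 0).trans (hfS 0)
  have hN : 0 ≤ norm43 K := by unfold norm43; positivity
  calc _ ≤ √(∫ ω, (b (X ω) + ε ω) ^ 4 ∂μ) * √(supN f * (norm43 K ^ 4 / η)) :=
        integral_mul_sq_le_sqrt_mul_sqrt (by fun_prop)
          ((measurable_conv (measurable_Kh hKmeas η) hψ).comp hXmeas).aemeasurable hY4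
          (by positivity) (lintegral_enorm_conv_Kh_comp_pow_four_le hXmeas hfmeas hS hfS hXlaw
            hKmeas hK43 hη hψ hψ2 hψ1)
    _ = _ := by
        rw [Real.sqrt_mul' _ (by positivity), Real.sqrt_div' _ hη.le,
          show norm43 K ^ 4 = (norm43 K ^ 2) ^ 2 by ring, Real.sqrt_sq (by positivity)]
        ring

theorem stmt_16
    {Ω : Type*} [MeasurableSpace Ω] (μ : Measure Ω) [IsProbabilityMeasure μ]
    (X ε : Ω → ℝ) (b f K : ℝ → ℝ)
    (hXmeas : Measurable X) (hεmeas : Measurable ε)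
    (hbmeas : Measurable b) (hfmeas : Measurable f) (hKmeas : Measurable K)
    (hf0 : ∀ x, 0 ≤ f x)
    (hXlaw : Measure.map X μ
      = MeasureTheory.volume.withDensity (fun x => ENNReal.ofReal (f x)))
    (hεcent : ∫ ω, ε ω ∂μ = 0)
    (hindep : IndepFun X ε μ)
    -- Assumption 1
    (hKbdd : ∃ C, ∀ x, |K x| ≤ C)
    (hKL2 : Integrable (fun x : ℝ => (K x) ^ 2))
    (hKint : (∫ x : ℝ, K x) = 1)
    (hfbdd : ∃ C, ∀ x, f x ≤ C)
    -- K ∈ L^{4/3}(ℝ)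
    (hK43 : Integrable (fun x : ℝ => |K x| ^ ((4 : ℝ) / 3)))
    -- E(Y₁⁴) < ∞
    (hY4 : Integrable (fun ω => (b (X ω) + ε ω) ^ 4) μ) :
    ∀ η : ℝ, 0 < η → ∀ ψ : ℝ → ℝ, Measurable ψ →
      Integrable (fun x : ℝ => (ψ x) ^ 2) → (∫ x : ℝ, (ψ x) ^ 2) ≤ 1 →
      (∫ ω, ((b (X ω) + ε ω) * conv (Kh K η) ψ (X ω)) ^ 2 ∂μ)
        ≤ Real.sqrt (supN f) * (norm43 K) ^ 2
            * Real.sqrt (∫ ω, (b (X ω) + ε ω) ^ 4 ∂μ) / Real.sqrt η :=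
  stmt_16_general μ X ε b f K hXmeas hεmeas hbmeas hfmeas hKmeas hf0 hXlaw hfbdd hK43 hY4
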